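/- arXiv:0801.4156 — 2 statements merged into one kernel-verified Lean document; each statement's English description precedes it below -/
import Mathlib

section
/- Let ρ₁, ρ₂ be finite positive Borel measures on the circle Λ with ρ₁(Λ) ≤ ρ₂(Λ). Then the collapsed set function is nonnegative: for every half-open arc (a,b] ⊆ Λ one has ρ₁((a,b]) + J(a) − J(b) ≥ 0. -/
open MeasureTheory Set Filter Topology

noncomputable section

instance fact01 : Fact ((0:ℝ) < 1) := ⟨zero_lt_one⟩

/-- The circle `ℝ/ℤ`. -/
abbrev Circle' : Type := AddCircle (1:ℝ)

/-- The angular position of `w` in the arc starting at `u`, measured positively;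
a real number in `[0,1)`. -/
noncomputable def theta (u w : Circle') : ℝ := ((AddCircle.equivIco 1 0) (w - u) : ℝ)

/-- The closed arc `[u,v]` from `u` to `v` in the positive direction. -/
def arcCC (u v : Circle') : Set Circle' := {w | theta u w ≤ theta u v}

/-- The half-open arc `(u,v]`. -/
def arcOC (u v : Circle') : Set Circle' := {w | 0 < theta u w ∧ theta u w ≤ theta u v}

/-- The half-open arc `[u,v)`. -/
def arcCO (u v : Circle') : Set Circle' := {w | theta u w < theta u v}

/-- The open arc `(u,v)`. -/
def arcOO (u v : Circle') : Set Circle' := {w | 0 < theta u w ∧ theta u w < theta u v}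

/-- The excess `E(u,v) = ρ₁([u,v]) - ρ₂([u,v])`. -/
noncomputable def excess (ρ₁ ρ₂ : Measure Circle') (u v : Circle') : ℝ :=
  (ρ₁ (arcCC u v)).toReal - (ρ₂ (arcCC u v)).toReal

/-- The flux `J(v) = sup_u max (E(u,v)) 0`. -/
noncomputable def flux (ρ₁ ρ₂ : Measure Circle') (v : Circle') : ℝ :=
  ⨆ u : Circle', max (excess ρ₁ ρ₂ u v) 0

/-- The set `𝒥 = {v | ∃ u, E(u,v) > 0}`. -/
def Jset (ρ₁ ρ₂ : Measure Circle') : Set Circle' := {v | ∃ u : Circle', 0 < excess ρ₁ ρ₂ u v}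

/-!
When `a` lies on `[u,b]`, the arc `[u,b]` is covered by `[u,a]` and `(a,b]`, and
`[u,a] ⊆ [u,b]`; hence `E(u,b) ≤ E(u,a) + ρ₁((a,b]) ≤ J(a) + ρ₁((a,b])`. For `u` inside `(a,b]`
the whole arc `[u,b]` lies in `(a,b]`, so `E(u,b) ≤ ρ₁([u,b]) ≤ ρ₁((a,b])`. Taking the supremum
over `u` gives `J(b) ≤ ρ₁((a,b]) + J(a)`.
-/

section Arcs

variable {u a b w : Circle'}

lemma theta_nonneg (u w : Circle') : 0 ≤ theta u w :=
  ((AddCircle.equivIco 1 0) (w - u)).2.1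

lemma theta_lt_one (u w : Circle') : theta u w < 1 := by
  simpa [theta] using ((AddCircle.equivIco 1 0) (w - u)).2.2

lemma theta_coe (s t : ℝ) : theta s t = Int.fract (t - s) := by
  rw [theta, ← AddCircle.coe_sub, AddCircle.coe_equivIco_mk_apply]
  simp

lemma theta_eq_fract_sub (u a w : Circle') :
    theta a w = Int.fract (theta u w - theta u a) := by
  induction u using QuotientAddGroup.induction_on with | H s =>
  induction a using QuotientAddGroup.induction_on with | H p =>
  induction w using QuotientAddGroup.induction_on with | H t =>
  simp only [theta_coe]
  have h : Int.fract (t - s) - Int.fract (p - s) = (t - p) - ((⌊t - s⌋ - ⌊p - s⌋ : ℤ) : ℝ) := by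
    unfold Int.fract; push_cast; ring
  rw [h, Int.fract_sub_intCast]

lemma theta_eq_sub_of_le (h : theta u a ≤ theta u w) : theta a w = theta u w - theta u a := by
  rw [theta_eq_fract_sub u, Int.fract_eq_self]
  exact ⟨by linarith, by linarith [theta_lt_one u w, theta_nonneg u a]⟩

lemma theta_eq_sub_add_one_of_lt (h : theta u w < theta u a) :
    theta a w = theta u w - theta u a + 1 := by
  rw [theta_eq_fract_sub u, ← Int.fract_add_one, Int.fract_eq_self]
  exact ⟨by linarith [theta_lt_one u a, theta_nonneg u w], by linarith⟩

lemma arcCC_subset_arcCC (h : theta u a ≤ theta u b) : arcCC u a ⊆ arcCC u b :=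
  fun _ hw => le_trans hw h

lemma arcCC_subset_arcCC_union_arcOC (u a b : Circle') : arcCC u b ⊆ arcCC u a ∪ arcOC a b := by
  intro w (hw : theta u w ≤ theta u b)
  rcases le_or_gt (theta u w) (theta u a) with hwa | haw
  · exact Or.inl hwa
  · right
    rw [arcOC, mem_ofPred_eq, theta_eq_sub_of_le haw.le, theta_eq_sub_of_le (haw.le.trans hw)]
    constructor <;> linarith

lemma arcCC_subset_arcOC_of_lt (h : theta u b < theta u a) : arcCC u b ⊆ arcOC a b := by
  intro w (hw : theta u w ≤ theta u b)
  rw [arcOC, mem_ofPred_eq, theta_eq_sub_add_one_of_lt (hw.trans_lt h),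
    theta_eq_sub_add_one_of_lt h]
  constructor <;> linarith [theta_lt_one u a, theta_nonneg u w]

end Arcs

section Flux

variable (ρ₁ ρ₂ : Measure Circle')

lemma excess_le_measureReal (u v : Circle') : excess ρ₁ ρ₂ u v ≤ ρ₁.real (arcCC u v) :=
  sub_le_self _ measureReal_nonneg

lemma bddAbove_range_max_excess [IsFiniteMeasure ρ₁] (v : Circle') :
    BddAbove (range fun u => max (excess ρ₁ ρ₂ u v) 0) := by
  refine ⟨ρ₁.real univ, ?_⟩
  rintro _ ⟨u, rfl⟩
  exact max_le ((excess_le_measureReal ρ₁ ρ₂ u v).trans (measureReal_mono (subset_univ _)))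
    measureReal_nonneg

lemma excess_le_flux [IsFiniteMeasure ρ₁] (u v : Circle') : excess ρ₁ ρ₂ u v ≤ flux ρ₁ ρ₂ v :=
  (le_max_left _ _).trans (le_ciSup (bddAbove_range_max_excess ρ₁ ρ₂ v) u)

lemma flux_nonneg [IsFiniteMeasure ρ₁] (v : Circle') : 0 ≤ flux ρ₁ ρ₂ v :=
  (le_max_right _ _).trans (le_ciSup (bddAbove_range_max_excess ρ₁ ρ₂ v) v)

lemma excess_le_excess_add_measureReal_arcOC [IsFiniteMeasure ρ₁] [IsFiniteMeasure ρ₂]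
    {u a b : Circle'} (h : theta u a ≤ theta u b) :
    excess ρ₁ ρ₂ u b ≤ excess ρ₁ ρ₂ u a + ρ₁.real (arcOC a b) := by
  have h₁ : ρ₁.real (arcCC u b) ≤ ρ₁.real (arcCC u a) + ρ₁.real (arcOC a b) :=
    (measureReal_mono (arcCC_subset_arcCC_union_arcOC u a b)).trans (measureReal_union_le _ _)
  have h₂ : ρ₂.real (arcCC u a) ≤ ρ₂.real (arcCC u b) := measureReal_mono (arcCC_subset_arcCC h)
  simp only [excess, ← measureReal_def] at *
  linarith

lemma excess_le_measureReal_arcOC_add_flux [IsFiniteMeasure ρ₁] [IsFiniteMeasure ρ₂]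
    (u a b : Circle') : excess ρ₁ ρ₂ u b ≤ ρ₁.real (arcOC a b) + flux ρ₁ ρ₂ a := by
  rcases le_or_gt (theta u a) (theta u b) with hab | hba
  · linarith [excess_le_excess_add_measureReal_arcOC ρ₁ ρ₂ hab, excess_le_flux ρ₁ ρ₂ u a]
  · calc excess ρ₁ ρ₂ u b ≤ ρ₁.real (arcCC u b) := excess_le_measureReal ρ₁ ρ₂ u b
      _ ≤ ρ₁.real (arcOC a b) := measureReal_mono (arcCC_subset_arcOC_of_lt hba)
      _ ≤ ρ₁.real (arcOC a b) + flux ρ₁ ρ₂ a := le_add_of_nonneg_right (flux_nonneg ρ₁ ρ₂ a)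

lemma flux_le_measureReal_arcOC_add_flux [IsFiniteMeasure ρ₁] [IsFiniteMeasure ρ₂]
    (a b : Circle') : flux ρ₁ ρ₂ b ≤ ρ₁.real (arcOC a b) + flux ρ₁ ρ₂ a :=
  ciSup_le fun u => max_le (excess_le_measureReal_arcOC_add_flux ρ₁ ρ₂ u a b)
    (add_nonneg measureReal_nonneg (flux_nonneg ρ₁ ρ₂ a))

end Flux

theorem stmt5_general (ρ₁ ρ₂ : Measure Circle') [IsFiniteMeasure ρ₁] [IsFiniteMeasure ρ₂] :
    ∀ a b : Circle', 0 ≤ (ρ₁ (arcOC a b)).toReal + flux ρ₁ ρ₂ a - flux ρ₁ ρ₂ b := fun a b =>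
  sub_nonneg.mpr (flux_le_measureReal_arcOC_add_flux ρ₁ ρ₂ a b)

/-- the collapsed set function is nonnegative: for every half-open arc
`(a,b]` one has `ρ₁((a,b]) + J(a) - J(b) ≥ 0`. -/
theorem stmt5 (ρ₁ ρ₂ : Measure Circle') [IsFiniteMeasure ρ₁] [IsFiniteMeasure ρ₂]
    (hmass : ρ₁ Set.univ ≤ ρ₂ Set.univ) :
    ∀ a b : Circle', 0 ≤ (ρ₁ (arcOC a b)).toReal + flux ρ₁ ρ₂ a - flux ρ₁ ρ₂ b :=
  stmt5_general ρ₁ ρ₂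

end
end

section
/- Let ρ₁, ρ₂ be finite positive Borel measures on the circle Λ, absolutely continuous with respect to Haar measure with densities f₁, f₂ ≥ 0, and with ρ₁(Λ) ≤ ρ₂(Λ). Then for every half-open arc (a,b] ⊆ Λ one has ρ₁((a,b]) + J(a) − J(b) = ∫_{(a,b]∩𝒥ᶜ} f₁ dLeb + ∫_{(a,b]∩𝒥} f₂ dLeb; that is, the collapsed measure C_{ρ₂}[ρ₁] is absolutely continuous with density equal to f₂ on 𝒥 and to f₁ on the complement of 𝒥. -/
/-!
Lift everything to the line through the base point `a`: with `g = f₁ - f₂` pulled back (a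
1-periodic function) and `φ` its primitive, the mass condition reads `φ x ≤ φ (x - 1)`, so the
minimum of `φ` over `[x - 1, x]` is its running minimum `m x`. Then `E(u, a + x) = φ x - φ (x - θ)`,
`J(a + x) = φ x - m x`, and `𝒥` lifts to the excursion set `W = {m < φ}`. The theorem becomes the
reflection identity `∫_{(x,y] ∩ W} g = (φ - m) y - (φ - m) x`. On each component interval of `W`
the running minimum is constant and `φ` meets it at both ends, so `g` integrates to zero over `W`
between two contact points; from any point back to the last contact point only excursion remains.
-/

open MeasureTheory Set Filter Topology
open scoped ENNReal NNReal

noncomputable section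

theorem IsOpen.csInf_notMem {s : Set ℝ} (hs : IsOpen s) (hb : BddBelow s) : sInf s ∉ s :=
  fun h => by
    obtain ⟨ε, hε, hball⟩ := Metric.isOpen_iff.1 hs _ h
    have := csInf_le hb (hball (show sInf s - ε / 2 ∈ Metric.ball (sInf s) ε by
      rw [Real.ball_eq_Ioo]; constructor <;> linarith))
    linarith

theorem IsOpen.csSup_notMem {s : Set ℝ} (hs : IsOpen s) (hb : BddAbove s) : sSup s ∉ s :=
  fun h => by
    obtain ⟨ε, hε, hball⟩ := Metric.isOpen_iff.1 hs _ h
    have := le_csSup hb (hball (show sSup s + ε / 2 ∈ Metric.ball (sSup s) ε by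
      rw [Real.ball_eq_Ioo]; constructor <;> linarith))
    linarith

theorem IsOpen.connectedComponentIn_eq_Ioo {U : Set ℝ} (hU : IsOpen U)
    (hb : Bornology.IsBounded U) {x : ℝ} (hx : x ∈ U) :
    ∃ a b, connectedComponentIn U x = Ioo a b ∧ a ∉ U ∧ b ∉ U := by
  set C := connectedComponentIn U x
  have hCo : IsOpen C := hU.connectedComponentIn
  have hCb : Bornology.IsBounded C := hb.subset (connectedComponentIn_subset U x)
  have hIoo : Ioo (sInf C) (sSup C) ⊆ C :=
    (isConnected_connectedComponentIn_iff.2 hx).Ioo_csInf_csSup_subset hCb.bddBelow hCb.bddAbove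
  have hIcc : C ⊆ Icc (sInf C) (sSup C) := subset_Icc_csInf_csSup hCb.bddBelow hCb.bddAbove
  have hinf : sInf C ∉ C := hCo.csInf_notMem hCb.bddBelow
  have hsup : sSup C ∉ C := hCo.csSup_notMem hCb.bddAbove
  have hC : C = Ioo (sInf C) (sSup C) := hIoo.antisymm' fun y hy =>
    ⟨(hIcc hy).1.lt_of_ne (ne_of_mem_of_not_mem hy hinf).symm,
      (hIcc hy).2.lt_of_ne (ne_of_mem_of_not_mem hy hsup)⟩
  have hxC : x ∈ Ioo (sInf C) (sSup C) := hC ▸ mem_connectedComponentIn hx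
  refine ⟨sInf C, sSup C, hC, fun h => hinf ?_, fun h => hsup ?_⟩
  · refine isPreconnected_Ico.subset_connectedComponentIn (Ioo_subset_Ico_self hxC) ?_
      (left_mem_Ico.2 (hxC.1.trans hxC.2))
    rw [← Ioo_insert_left (hxC.1.trans hxC.2)]
    exact insert_subset h (hIoo.trans (connectedComponentIn_subset U x))
  · refine isPreconnected_Ioc.subset_connectedComponentIn (Ioo_subset_Ioc_self hxC) ?_
      (right_mem_Ioc.2 (hxC.1.trans hxC.2))
    rw [← Ioo_insert_right (hxC.1.trans hxC.2)]
    exact insert_subset h (hIoo.trans (connectedComponentIn_subset U x))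

theorem IsOpen.setIntegral_eq_zero_of_forall_component {E : Type*} [NormedAddCommGroup E]
    [NormedSpace ℝ E] {μ : Measure ℝ} {U : Set ℝ} {g : ℝ → E} (hU : IsOpen U)
    (hb : Bornology.IsBounded U) (hg : IntegrableOn g U μ)
    (hzero : ∀ a b, Ioo a b ⊆ U → a ∉ U → b ∉ U → ∫ x in Ioo a b, g x ∂μ = 0) :
    ∫ x in U, g x ∂μ = 0 := by
  set S := connectedComponentIn U '' U
  have hS : S ⊆ range fun q : ℚ => connectedComponentIn U q := by
    rintro _ ⟨x, hx, rfl⟩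
    obtain ⟨q, hq⟩ := Rat.denseRange_cast.exists_mem_open hU.connectedComponentIn
      ⟨x, mem_connectedComponentIn hx⟩
    exact ⟨q, (connectedComponentIn_eq hq).symm⟩
  have : Countable S := ((countable_range _).mono hS).to_subtype
  have hU_eq : U = ⋃ s : S, (s : Set ℝ) := by
    rw [← sUnion_eq_iUnion]
    refine subset_antisymm (fun x hx => ⟨_, mem_image_of_mem _ hx, mem_connectedComponentIn hx⟩) ?_
    rintro y ⟨_, ⟨x, -, rfl⟩, hy⟩
    exact connectedComponentIn_subset U x hy
  have hdisj : Pairwise (Function.onFun Disjoint fun s : S => (s : Set ℝ)) := by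
    have hcomp_eq : ∀ (s : S) {z}, z ∈ (s : Set ℝ) → (s : Set ℝ) = connectedComponentIn U z := by
      intro s z hz
      obtain ⟨x, -, hx⟩ := s.2
      rw [← hx] at hz ⊢
      exact connectedComponentIn_eq hz
    exact fun s t hne => Set.disjoint_left.2 fun z hzs hzt =>
      hne (Subtype.ext ((hcomp_eq s hzs).trans (hcomp_eq t hzt).symm))
  have hcomp : ∀ s : S, ∫ x in (s : Set ℝ), g x ∂μ = 0 := by
    rintro ⟨_, x, hx, rfl⟩
    obtain ⟨a, b, hab, ha, hb⟩ := hU.connectedComponentIn_eq_Ioo hb hx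
    change ∫ y in connectedComponentIn U x, g y ∂μ = 0
    rw [hab]
    exact hzero a b (hab ▸ connectedComponentIn_subset U x) ha hb
  rw [hU_eq, integral_iUnion (fun s => ?_) hdisj (hU_eq ▸ hg), tsum_congr hcomp, tsum_zero]
  obtain ⟨_, x, hx, rfl⟩ := s
  exact (hU.connectedComponentIn).measurableSet

-- When `φ x ≤ φ (x - 1)` for all `x`, this is the running minimum `⨅ t ≤ x, φ t`.
def windowMin (φ : ℝ → ℝ) (x : ℝ) : ℝ := sInf ((fun r => φ (x - r)) '' Icc 0 1)

def excursionSet (φ : ℝ → ℝ) : Set ℝ := {x | windowMin φ x < φ x}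

section WindowMin

variable {φ : ℝ → ℝ}

theorem continuous_windowMin (hφ : Continuous φ) : Continuous (windowMin φ) :=
  isCompact_Icc.continuous_sInf (f := fun x r => φ (x - r)) (by fun_prop)

theorem isOpen_excursionSet (hφ : Continuous φ) : IsOpen (excursionSet φ) :=
  isOpen_lt (continuous_windowMin hφ) hφ

theorem windowMin_le_sub (hφ : Continuous φ) (x : ℝ) {r : ℝ} (hr : r ∈ Icc (0:ℝ) 1) :
    windowMin φ x ≤ φ (x - r) :=
  csInf_le ((isCompact_Icc.image (by fun_prop)).bddBelow) (mem_image_of_mem _ hr)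

theorem apply_add_natCast_le (hdrift : ∀ x, φ x ≤ φ (x - 1)) (s : ℝ) (n : ℕ) : φ (s + n) ≤ φ s := by
  induction n with
  | zero => simp
  | succ n ih =>
    have h := hdrift (s + (n + 1))
    rw [← add_assoc, add_sub_cancel_right] at h
    rw [Nat.cast_succ, ← add_assoc]
    exact h.trans ih

theorem windowMin_le_of_le (hφ : Continuous φ) (hdrift : ∀ x, φ x ≤ φ (x - 1)) {s x : ℝ}
    (hsx : s ≤ x) : windowMin φ x ≤ φ s := by
  set n := ⌊x - s⌋₊
  have hn : (n : ℝ) ≤ x - s := Nat.floor_le (sub_nonneg.2 hsx)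
  have hn' : x - s < n + 1 := Nat.lt_floor_add_one _
  calc windowMin φ x ≤ φ (x - (x - (s + n))) :=
        windowMin_le_sub hφ x ⟨by linarith, by linarith⟩
    _ = φ (s + n) := by ring_nf
    _ ≤ φ s := apply_add_natCast_le hdrift s n

theorem exists_windowMin_eq (hφ : Continuous φ) (hdrift : ∀ x, φ x ≤ φ (x - 1)) (x : ℝ) :
    ∃ r ∈ Ico (0:ℝ) 1, windowMin φ x = φ (x - r) := by
  obtain ⟨r, hr, hmin⟩ := isCompact_Icc.exists_isMinOn (nonempty_Icc.2 zero_le_one)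
    (f := fun r => φ (x - r)) (by fun_prop)
  have hm : windowMin φ x = φ (x - r) :=
    le_antisymm (windowMin_le_sub hφ x hr) (le_csInf (nonempty_Icc.2 zero_le_one |>.image _)
      (forall_mem_image.2 fun s hs => hmin hs))
  rcases hr.2.lt_or_eq with hr1 | rfl
  · exact ⟨r, ⟨hr.1, hr1⟩, hm⟩
  · refine ⟨0, ⟨le_rfl, zero_lt_one⟩, le_antisymm (windowMin_le_sub hφ x ⟨le_rfl, zero_le_one⟩) ?_⟩
    rw [hm, sub_zero]
    exact hdrift x

theorem windowMin_antitone (hφ : Continuous φ) (hdrift : ∀ x, φ x ≤ φ (x - 1)) :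
    Antitone (windowMin φ) := fun x y hxy => by
  obtain ⟨r, hr, hm⟩ := exists_windowMin_eq hφ hdrift x
  exact hm ▸ windowMin_le_of_le hφ hdrift (by linarith [hr.1])

theorem windowMin_eq_of_Ioo_subset (hφ : Continuous φ) (hdrift : ∀ x, φ x ≤ φ (x - 1))
    {c d : ℝ} (hcd : c ≤ d) (hW : Ioo c d ⊆ excursionSet φ) :
    windowMin φ d = windowMin φ c := by
  have hanti := windowMin_antitone hφ hdrift
  refine le_antisymm (hanti hcd) (not_lt.1 fun hlt => ?_)
  obtain rfl | hcd := hcd.eq_or_lt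
  · exact lt_irrefl _ hlt
  -- Otherwise the minimum already drops at some `s < d`, and the point where it is attained is a
  -- contact point inside `(c, d)`.
  obtain ⟨s, hs, hsc⟩ : ∃ s ∈ Ioo c d, windowMin φ s < windowMin φ c := by
    have hd : d ∈ closure (Ioo c d) := by rw [closure_Ioo hcd.ne]; exact ⟨hcd.le, le_rfl⟩
    obtain ⟨s, hs₁, hs₂⟩ := mem_closure_iff.1 hd _
      (isOpen_lt (continuous_windowMin hφ) continuous_const) hlt
    exact ⟨s, hs₂, hs₁⟩
  obtain ⟨r, hr, hm⟩ := exists_windowMin_eq hφ hdrift s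
  have htc : c < s - r := by
    by_contra! h
    exact (hm ▸ hsc).not_ge (windowMin_le_of_le hφ hdrift h)
  have ht : s - r ∈ excursionSet φ := hW ⟨htc, by linarith [hr.1, hs.2]⟩
  have hts := hanti (show s - r ≤ s by linarith [hr.1])
  rw [hm] at hts
  exact hts.not_gt ht

theorem iSup_max_sub_eq_sub_windowMin (hφ : Continuous φ) (hdrift : ∀ x, φ x ≤ φ (x - 1))
    (x : ℝ) : ⨆ r : Ico (0:ℝ) 1, max (φ x - φ (x - r)) 0 = φ x - windowMin φ x := by
  have : Nonempty (Ico (0:ℝ) 1) := (nonempty_Ico.2 zero_lt_one).to_subtype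
  have hle : ∀ r : Ico (0:ℝ) 1, max (φ x - φ (x - r)) 0 ≤ φ x - windowMin φ x := fun r =>
    max_le (sub_le_sub_left (windowMin_le_of_le hφ hdrift (by linarith [r.2.1])) _)
      (sub_nonneg.2 (windowMin_le_of_le hφ hdrift le_rfl))
  obtain ⟨r, hr, hm⟩ := exists_windowMin_eq hφ hdrift x
  refine le_antisymm (ciSup_le hle) ?_
  calc φ x - windowMin φ x = φ x - φ (x - (⟨r, hr⟩ : Ico (0:ℝ) 1)) := by rw [hm]
    _ ≤ max (φ x - φ (x - (⟨r, hr⟩ : Ico (0:ℝ) 1))) 0 := le_max_left _ _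
    _ ≤ _ := le_ciSup ⟨_, forall_mem_range.2 hle⟩ _

theorem exists_lt_sub_iff_mem_excursionSet (hφ : Continuous φ)
    (hdrift : ∀ x, φ x ≤ φ (x - 1)) (x : ℝ) :
    (∃ r : Ico (0:ℝ) 1, φ (x - r) < φ x) ↔ x ∈ excursionSet φ := by
  refine ⟨fun ⟨r, h⟩ => (windowMin_le_of_le hφ hdrift (by linarith [r.2.1])).trans_lt h,
    fun h => ?_⟩
  obtain ⟨r, hr, hm⟩ := exists_windowMin_eq hφ hdrift x
  exact ⟨⟨r, hr⟩, hm ▸ h⟩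

end WindowMin

section Excursion

variable {g φ : ℝ → ℝ}

theorem continuous_of_integral_eq_sub (hg : ∀ a b, IntervalIntegrable g volume a b)
    (hφ : ∀ a b, ∫ t in a..b, g t = φ b - φ a) : Continuous φ := by
  have h : (fun b => φ 0 + ∫ t in (0:ℝ)..b, g t) = φ := funext fun b => by
    rw [hφ, add_sub_cancel]
  exact h ▸ continuous_const.add (intervalIntegral.continuous_primitive hg 0)

theorem windowMin_eq_of_notMem (hφ : Continuous φ) (hdrift : ∀ x, φ x ≤ φ (x - 1)) {x : ℝ}
    (hx : x ∉ excursionSet φ) : windowMin φ x = φ x :=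
  le_antisymm (windowMin_le_of_le hφ hdrift le_rfl) (not_lt.1 hx)

theorem exists_le_notMem_excursionSet (hφ : Continuous φ) (hdrift : ∀ x, φ x ≤ φ (x - 1))
    (x : ℝ) : ∃ l ≤ x, l ∉ excursionSet φ ∧ Ioc l x ⊆ excursionSet φ := by
  set S := (excursionSet φ)ᶜ ∩ Iic x
  have hS : S.Nonempty := by
    obtain ⟨r, hr, hm⟩ := exists_windowMin_eq hφ hdrift x
    refine ⟨x - r, fun h => ?_, mem_Iic.2 (by linarith [hr.1])⟩
    have := windowMin_antitone hφ hdrift (show x - r ≤ x by linarith [hr.1])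
    exact (hm ▸ this).not_gt h
  have hSb : BddAbove S := ⟨x, fun _ h => h.2⟩
  have hl : sSup S ∈ S :=
    ((isOpen_excursionSet hφ).isClosed_compl.inter isClosed_Iic).csSup_mem hS hSb
  exact ⟨sSup S, hl.2, hl.1, fun y hy => by_contra fun h =>
    (le_csSup hSb ⟨h, hy.2⟩).not_gt hy.1⟩

theorem integral_indicator_excursionSet_eq_zero (hg : ∀ a b, IntervalIntegrable g volume a b)
    (hφ : ∀ a b, ∫ t in a..b, g t = φ b - φ a) (hdrift : ∀ x, φ x ≤ φ (x - 1)) {c d : ℝ}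
    (hc : c ∉ excursionSet φ) (hd : d ∉ excursionSet φ) :
    ∫ t in c..d, (excursionSet φ).indicator g t = 0 := by
  wlog hcd : c ≤ d generalizing c d
  · rw [intervalIntegral.integral_symm, this hd hc (le_of_not_ge hcd), neg_zero]
  have hφc := continuous_of_integral_eq_sub hg hφ
  set W := excursionSet φ
  have hWo : IsOpen W := isOpen_excursionSet hφc
  have hW : W ∩ Ioc c d = Ioo c d ∩ W := by
    ext t
    simp only [mem_inter_iff, mem_Ioc, mem_Ioo]
    exact ⟨fun ⟨ht, h₁, h₂⟩ => ⟨⟨h₁, h₂.lt_of_ne (ne_of_mem_of_not_mem ht hd)⟩, ht⟩,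
      fun ⟨⟨h₁, h₂⟩, ht⟩ => ⟨ht, h₁, h₂.le⟩⟩
  rw [intervalIntegral.integral_of_le hcd, integral_indicator hWo.measurableSet,
    Measure.restrict_restrict hWo.measurableSet, hW]
  refine (isOpen_Ioo.inter hWo).setIntegral_eq_zero_of_forall_component
    ((Metric.isBounded_Ioo c d).subset inter_subset_left) ?_ fun a b hab ha hb => ?_
  · exact (hg c d).1.mono_set (inter_subset_left.trans Ioo_subset_Ioc_self)
  rcases le_or_gt b a with hba | hab'
  · rw [Ioo_eq_empty (not_lt.2 hba), Measure.restrict_empty, integral_zero_measure]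
  obtain ⟨hca, hbd⟩ := (Ioo_subset_Ioo_iff hab').1 (hab.trans inter_subset_left)
  have ha' : a ∉ W := by
    rcases hca.eq_or_lt with rfl | hca
    · exact hc
    · exact fun h => ha ⟨⟨hca, hab'.trans_le hbd⟩, h⟩
  have hb' : b ∉ W := by
    rcases hbd.eq_or_lt with rfl | hbd
    · exact hd
    · exact fun h => hb ⟨⟨hca.trans_lt hab', hbd⟩, h⟩
  rw [← integral_Ioc_eq_integral_Ioo, ← intervalIntegral.integral_of_le hab'.le, hφ,
    ← windowMin_eq_of_notMem hφc hdrift ha', ← windowMin_eq_of_notMem hφc hdrift hb',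
    windowMin_eq_of_Ioo_subset hφc hdrift hab'.le (hab.trans inter_subset_right), sub_self]

theorem integral_indicator_excursionSet (hg : ∀ a b, IntervalIntegrable g volume a b)
    (hφ : ∀ a b, ∫ t in a..b, g t = φ b - φ a) (hdrift : ∀ x, φ x ≤ φ (x - 1)) (x y : ℝ) :
    ∫ t in x..y, (excursionSet φ).indicator g t
      = (φ y - windowMin φ y) - (φ x - windowMin φ x) := by
  have hφc := continuous_of_integral_eq_sub hg hφ
  have hWm : MeasurableSet (excursionSet φ) := (isOpen_excursionSet hφc).measurableSet
  have hgW : ∀ a b, IntervalIntegrable ((excursionSet φ).indicator g) volume a b :=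
    fun a b => ⟨(hg a b).1.indicator hWm, (hg a b).2.indicator hWm⟩
  -- Back to the last point `l ≤ z` where `φ` touches its running minimum, only excursion remains.
  have hlast : ∀ z, ∃ l ∉ excursionSet φ,
      ∫ t in l..z, (excursionSet φ).indicator g t = φ z - windowMin φ z := by
    intro z
    obtain ⟨l, hlz, hl, hsub⟩ := exists_le_notMem_excursionSet hφc hdrift z
    refine ⟨l, hl, ?_⟩
    rw [intervalIntegral.integral_congr_ae (g := g) (ae_of_all _ fun t ht =>
        indicator_of_mem (hsub (uIoc_of_le hlz ▸ ht)) g), hφ,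
      ← windowMin_eq_of_notMem hφc hdrift hl,
      windowMin_eq_of_Ioo_subset hφc hdrift hlz (Ioo_subset_Ioc_self.trans hsub)]
  obtain ⟨lx, hlx, hx⟩ := hlast x
  obtain ⟨ly, hly, hy⟩ := hlast y
  have h₁ := intervalIntegral.integral_add_adjacent_intervals (hgW lx x) (hgW x y)
  have h₂ := intervalIntegral.integral_add_adjacent_intervals (hgW lx ly) (hgW ly y)
  have h₀ := integral_indicator_excursionSet_eq_zero hg hφ hdrift hlx hly
  linarith

theorem setIntegral_Ioc_collapse {g₁ g₂ : ℝ → ℝ} (hg₁ : ∀ a b, IntervalIntegrable g₁ volume a b)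
    (hg₂ : ∀ a b, IntervalIntegrable g₂ volume a b)
    (hφ : ∀ a b, ∫ t in a..b, (g₁ t - g₂ t) = φ b - φ a) (hdrift : ∀ x, φ x ≤ φ (x - 1))
    {σ : ℝ} (hσ : 0 ≤ σ) :
    (∫ t in Ioc 0 σ, g₁ t) + (φ 0 - windowMin φ 0) - (φ σ - windowMin φ σ)
      = (∫ t in Ioc 0 σ ∩ (excursionSet φ)ᶜ, g₁ t) + ∫ t in Ioc 0 σ ∩ excursionSet φ, g₂ t := by
  have hg : ∀ a b, IntervalIntegrable (fun t => g₁ t - g₂ t) volume a b :=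
    fun a b => (hg₁ a b).sub (hg₂ a b)
  have hWm : MeasurableSet (excursionSet φ) :=
    (isOpen_excursionSet (continuous_of_integral_eq_sub hg hφ)).measurableSet
  have hexc := integral_indicator_excursionSet hg hφ hdrift 0 σ
  rw [intervalIntegral.integral_of_le hσ, integral_indicator hWm, Measure.restrict_restrict hWm,
    inter_comm, integral_sub ((hg₁ 0 σ).1.mono_set inter_subset_left)
      ((hg₂ 0 σ).1.mono_set inter_subset_left)] at hexc
  have hsplit := integral_inter_add_sdiff hWm (hg₁ 0 σ).1
  rw [sdiff_eq] at hsplit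
  linarith

end Excursion

section Circle

theorem coe_theta (u v : Circle') : ((theta u v : ℝ) : Circle') = v - u :=
  AddCircle.coe_equivIco

theorem theta_mem (u v : Circle') : theta u v ∈ Ico (0:ℝ) 1 := by
  simpa [theta] using ((AddCircle.equivIco 1 0) (v - u)).2

theorem theta_add_coe (u : Circle') {t : ℝ} (ht : t ∈ Ico (0:ℝ) 1) :
    theta u (u + (t : Circle')) = t := by
  rw [theta, add_sub_cancel_left]
  exact AddCircle.equivIco_coe_of_mem (by rwa [zero_add])

theorem surjective_theta (v : Circle') :
    Function.Surjective fun u => (⟨theta u v, theta_mem u v⟩ : Ico (0:ℝ) 1) := fun r =>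
  ⟨v - (r : ℝ), Subtype.ext (by simpa using theta_add_coe (v - (r : ℝ)) r.2)⟩

theorem measurable_theta (u : Circle') : Measurable (theta u) :=
  measurable_subtype_coe.comp <|
    (AddCircle.measurableEquivIco 1 0).measurable.comp (measurable_id.sub_const u)

theorem measurableSet_arcOC (u v : Circle') : MeasurableSet (arcOC u v) :=
  (measurableSet_lt measurable_const (measurable_theta u)).inter
    (measurableSet_le (measurable_theta u) measurable_const)

theorem arcCC_eq_insert (u v : Circle') : arcCC u v = insert u (arcOC u v) := by
  ext w
  have hw : theta u w = 0 ↔ w = u := by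
    refine ⟨fun h => ?_, fun h => ?_⟩
    · rw [← sub_eq_zero, ← coe_theta, h, AddCircle.coe_zero]
    · simpa [h] using theta_add_coe u (t := 0) ⟨le_rfl, zero_lt_one⟩
  simp only [arcCC, arcOC, mem_insert_iff, mem_ofPred_eq, ← hw]
  rcases (theta_mem u w).1.eq_or_lt with h | h
  · simp [← h, (theta_mem u v).1]
  · simp [h, h.ne']

theorem volume_singleton_circle (u : Circle') : (volume : Measure Circle') {u} = 0 := by
  simpa using AddCircle.volume_closedBall (T := 1) (x := u) 0

theorem measurePreserving_add_coe (u : Circle') :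
    MeasurePreserving (fun t : ℝ => u + (t : Circle')) (volume.restrict (Ioo 0 1)) volume := by
  have h := (measurePreserving_add_left volume u).comp (AddCircle.measurePreserving_mk 1 0)
  rwa [zero_add, ← Measure.restrict_congr_set Ioo_ae_eq_Ioc] at h

theorem preimage_arcOC_inter_Ioo (u v : Circle') :
    (fun t : ℝ => u + (t : Circle')) ⁻¹' arcOC u v ∩ Ioo 0 1 = Ioc 0 (theta u v) := by
  ext t
  simp only [arcOC, mem_inter_iff, mem_preimage, mem_ofPred_eq, mem_Ioo, mem_Ioc]
  constructor
  · rintro ⟨h, ht₀, ht₁⟩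
    rwa [theta_add_coe u ⟨ht₀.le, ht₁⟩] at h
  · rintro ⟨ht₀, htθ⟩
    have ht₁ : t < 1 := htθ.trans_lt (theta_mem u v).2
    rw [theta_add_coe u ⟨ht₀.le, ht₁⟩]
    exact ⟨⟨ht₀, htθ⟩, ht₀, ht₁⟩

end Circle

section Density

variable {f : Circle' → ℝ≥0∞}

theorem withDensity_arcCC_eq_arcOC (f : Circle' → ℝ≥0∞) (u v : Circle') :
    volume.withDensity f (arcCC u v) = volume.withDensity f (arcOC u v) := by
  rw [arcCC_eq_insert, insert_eq]
  exact measure_congr (union_ae_eq_right_of_ae_eq_empty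
    (ae_eq_empty.2 (withDensity_absolutelyContinuous _ _ (volume_singleton_circle u))))

theorem toReal_setLIntegral_eq (hf : Measurable f) (hfin : ∫⁻ x, f x ≠ ∞) (u : Circle')
    {A : Set Circle'} (hA : MeasurableSet A) :
    (∫⁻ x in A, f x).toReal
      = ∫ t in (fun t : ℝ => u + (t : Circle')) ⁻¹' A ∩ Ioo 0 1, (f (u + t)).toReal := by
  have hmp := measurePreserving_add_coe u
  have hfin' : ∀ᵐ t : ℝ ∂(volume.restrict (Ioo 0 1)), f (u + t) < ∞ :=
    ae_lt_top (hf.comp hmp.measurable) (by rwa [hmp.lintegral_comp hf])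
  rw [← hmp.setLIntegral_comp_preimage hA hf, Measure.restrict_restrict (hmp.measurable hA)]
  exact (integral_toReal (hf.comp hmp.measurable).aemeasurable
    (ae_restrict_of_ae_restrict_of_subset inter_subset_right hfin')).symm

theorem toReal_withDensity_arcOC (hf : Measurable f) (hfin : ∫⁻ x, f x ≠ ∞) (u v : Circle') :
    (volume.withDensity f (arcOC u v)).toReal = ∫ t in (0:ℝ)..theta u v, (f (u + t)).toReal := by
  rw [withDensity_apply _ (measurableSet_arcOC u v),
    toReal_setLIntegral_eq hf hfin u (measurableSet_arcOC u v), preimage_arcOC_inter_Ioo,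
    intervalIntegral.integral_of_le (theta_mem u v).1]

theorem toReal_withDensity_arcCC_add_coe (hf : Measurable f) (hfin : ∫⁻ x, f x ≠ ∞)
    (a u : Circle') (x : ℝ) :
    (volume.withDensity f (arcCC u (a + x))).toReal
      = ∫ t in (x - theta u (a + x))..x, (f (a + t)).toReal := by
  rw [withDensity_arcCC_eq_arcOC, toReal_withDensity_arcOC hf hfin]
  set θ := theta u (a + x)
  have hu : ∀ t : ℝ, u + (t : Circle') = a + ((x - θ + t : ℝ) : Circle') := fun t => by
    rw [AddCircle.coe_add, AddCircle.coe_sub, coe_theta]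
    abel
  simp_rw [hu]
  rw [intervalIntegral.integral_comp_add_left (fun t => (f (a + (t : Circle'))).toReal),
    add_zero, sub_add_cancel]

theorem periodic_toReal_add_coe (f : Circle' → ℝ≥0∞) (u : Circle') :
    Function.Periodic (fun t : ℝ => (f (u + t)).toReal) 1 := fun t => by
  simp only [AddCircle.coe_add, AddCircle.coe_period, add_zero]

theorem intervalIntegrable_toReal_add_coe (hf : Measurable f) (hfin : ∫⁻ x, f x ≠ ∞)
    (u : Circle') (a b : ℝ) :
    IntervalIntegrable (fun t : ℝ => (f (u + t)).toReal) volume a b := by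
  have hmp := measurePreserving_add_coe u
  refine (periodic_toReal_add_coe f u).intervalIntegrable₀ one_ne_zero ?_ a b
  rw [intervalIntegrable_iff_integrableOn_Ioc_of_le zero_le_one,
    integrableOn_Ioc_iff_integrableOn_Ioo]
  exact integrable_toReal_of_lintegral_ne_top (hf.comp hmp.measurable).aemeasurable
    (by rwa [hmp.lintegral_comp hf])

theorem integral_toReal_add_coe_period (hf : Measurable f) (hfin : ∫⁻ x, f x ≠ ∞)
    (u : Circle') (x : ℝ) :
    ∫ t in x..x + 1, (f (u + t)).toReal = (∫⁻ y, f y).toReal := by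
  rw [(periodic_toReal_add_coe f u).intervalIntegral_add_eq x 0, zero_add,
    intervalIntegral.integral_of_le zero_le_one, integral_Ioc_eq_integral_Ioo,
    ← Measure.restrict_univ (μ := (volume : Measure Circle')),
    toReal_setLIntegral_eq hf hfin u MeasurableSet.univ, preimage_univ, univ_inter]

end Density

section Collapse

variable {f₁ f₂ : Circle' → ℝ≥0∞}

-- For `0 ≤ x < 1` this is `ρ₁((a, a + x]) - ρ₂((a, a + x])`.
def cumulativeExcess (f₁ f₂ : Circle' → ℝ≥0∞) (a : Circle') (x : ℝ) : ℝ :=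
  ∫ t in (0:ℝ)..x, ((f₁ (a + t)).toReal - (f₂ (a + t)).toReal)

theorem intervalIntegrable_toReal_sub_add_coe (hf₁ : Measurable f₁) (hfin₁ : ∫⁻ x, f₁ x ≠ ∞)
    (hf₂ : Measurable f₂) (hfin₂ : ∫⁻ x, f₂ x ≠ ∞) (a : Circle') (p q : ℝ) :
    IntervalIntegrable (fun t : ℝ => (f₁ (a + t)).toReal - (f₂ (a + t)).toReal) volume p q :=
  (intervalIntegrable_toReal_add_coe hf₁ hfin₁ a p q).sub
    (intervalIntegrable_toReal_add_coe hf₂ hfin₂ a p q)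

theorem integral_toReal_sub_add_coe (hf₁ : Measurable f₁) (hfin₁ : ∫⁻ x, f₁ x ≠ ∞)
    (hf₂ : Measurable f₂) (hfin₂ : ∫⁻ x, f₂ x ≠ ∞) (a : Circle') (p q : ℝ) :
    ∫ t in p..q, ((f₁ (a + t)).toReal - (f₂ (a + t)).toReal)
      = cumulativeExcess f₁ f₂ a q - cumulativeExcess f₁ f₂ a p :=
  (intervalIntegral.integral_interval_sub_left
    (intervalIntegrable_toReal_sub_add_coe hf₁ hfin₁ hf₂ hfin₂ a 0 q)
    (intervalIntegrable_toReal_sub_add_coe hf₁ hfin₁ hf₂ hfin₂ a 0 p)).symm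

theorem continuous_cumulativeExcess (hf₁ : Measurable f₁) (hfin₁ : ∫⁻ x, f₁ x ≠ ∞)
    (hf₂ : Measurable f₂) (hfin₂ : ∫⁻ x, f₂ x ≠ ∞) (a : Circle') :
    Continuous (cumulativeExcess f₁ f₂ a) :=
  continuous_of_integral_eq_sub (intervalIntegrable_toReal_sub_add_coe hf₁ hfin₁ hf₂ hfin₂ a)
    (integral_toReal_sub_add_coe hf₁ hfin₁ hf₂ hfin₂ a)

theorem cumulativeExcess_le_sub_one (hf₁ : Measurable f₁) (hfin₁ : ∫⁻ x, f₁ x ≠ ∞)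
    (hf₂ : Measurable f₂) (hfin₂ : ∫⁻ x, f₂ x ≠ ∞) (hmass : ∫⁻ x, f₁ x ≤ ∫⁻ x, f₂ x)
    (a : Circle') (x : ℝ) : cumulativeExcess f₁ f₂ a x ≤ cumulativeExcess f₁ f₂ a (x - 1) := by
  have h := integral_toReal_sub_add_coe hf₁ hfin₁ hf₂ hfin₂ a (x - 1) x
  have h₁ := integral_toReal_add_coe_period hf₁ hfin₁ a (x - 1)
  have h₂ := integral_toReal_add_coe_period hf₂ hfin₂ a (x - 1)
  rw [sub_add_cancel] at h₁ h₂
  rw [intervalIntegral.integral_sub (intervalIntegrable_toReal_add_coe hf₁ hfin₁ a _ _)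
    (intervalIntegrable_toReal_add_coe hf₂ hfin₂ a _ _), h₁, h₂] at h
  linarith [ENNReal.toReal_mono hfin₂ hmass]

theorem excess_add_coe (hf₁ : Measurable f₁) (hfin₁ : ∫⁻ x, f₁ x ≠ ∞)
    (hf₂ : Measurable f₂) (hfin₂ : ∫⁻ x, f₂ x ≠ ∞) (a u : Circle') (x : ℝ) :
    excess (volume.withDensity f₁) (volume.withDensity f₂) u (a + x)
      = cumulativeExcess f₁ f₂ a x - cumulativeExcess f₁ f₂ a (x - theta u (a + x)) := by
  rw [excess, toReal_withDensity_arcCC_add_coe hf₁ hfin₁,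
    toReal_withDensity_arcCC_add_coe hf₂ hfin₂,
    ← intervalIntegral.integral_sub (intervalIntegrable_toReal_add_coe hf₁ hfin₁ a _ _)
      (intervalIntegrable_toReal_add_coe hf₂ hfin₂ a _ _),
    integral_toReal_sub_add_coe hf₁ hfin₁ hf₂ hfin₂]

theorem flux_add_coe (hf₁ : Measurable f₁) (hfin₁ : ∫⁻ x, f₁ x ≠ ∞)
    (hf₂ : Measurable f₂) (hfin₂ : ∫⁻ x, f₂ x ≠ ∞) (hmass : ∫⁻ x, f₁ x ≤ ∫⁻ x, f₂ x)
    (a : Circle') (x : ℝ) :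
    flux (volume.withDensity f₁) (volume.withDensity f₂) (a + x)
      = cumulativeExcess f₁ f₂ a x - windowMin (cumulativeExcess f₁ f₂ a) x := by
  simp only [flux, excess_add_coe hf₁ hfin₁ hf₂ hfin₂]
  exact ((surjective_theta (a + x)).iSup_comp fun r : Ico (0:ℝ) 1 =>
    max (cumulativeExcess f₁ f₂ a x - cumulativeExcess f₁ f₂ a (x - r)) 0).trans
    (iSup_max_sub_eq_sub_windowMin (continuous_cumulativeExcess hf₁ hfin₁ hf₂ hfin₂ a)
      (cumulativeExcess_le_sub_one hf₁ hfin₁ hf₂ hfin₂ hmass a) x)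

theorem add_coe_mem_Jset_iff (hf₁ : Measurable f₁) (hfin₁ : ∫⁻ x, f₁ x ≠ ∞)
    (hf₂ : Measurable f₂) (hfin₂ : ∫⁻ x, f₂ x ≠ ∞) (hmass : ∫⁻ x, f₁ x ≤ ∫⁻ x, f₂ x)
    (a : Circle') (x : ℝ) :
    a + (x : Circle') ∈ Jset (volume.withDensity f₁) (volume.withDensity f₂)
      ↔ x ∈ excursionSet (cumulativeExcess f₁ f₂ a) := by
  simp only [Jset, mem_ofPred_eq, excess_add_coe hf₁ hfin₁ hf₂ hfin₂, sub_pos]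
  exact ((surjective_theta (a + x)).exists (p := fun r : Ico (0:ℝ) 1 =>
    cumulativeExcess f₁ f₂ a (x - r) < cumulativeExcess f₁ f₂ a x)).symm.trans
    (exists_lt_sub_iff_mem_excursionSet (continuous_cumulativeExcess hf₁ hfin₁ hf₂ hfin₂ a)
      (cumulativeExcess_le_sub_one hf₁ hfin₁ hf₂ hfin₂ hmass a) x)

theorem measurableSet_Jset (hf₁ : Measurable f₁) (hfin₁ : ∫⁻ x, f₁ x ≠ ∞)
    (hf₂ : Measurable f₂) (hfin₂ : ∫⁻ x, f₂ x ≠ ∞) (hmass : ∫⁻ x, f₁ x ≤ ∫⁻ x, f₂ x) :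
    MeasurableSet (Jset (volume.withDensity f₁) (volume.withDensity f₂)) := by
  obtain ⟨a⟩ : Nonempty Circle' := inferInstance
  have hJ : Jset (volume.withDensity f₁) (volume.withDensity f₂)
      = theta a ⁻¹' excursionSet (cumulativeExcess f₁ f₂ a) := by
    ext v
    have h := add_coe_mem_Jset_iff hf₁ hfin₁ hf₂ hfin₂ hmass a (theta a v)
    rwa [coe_theta, add_sub_cancel] at h
  rw [hJ]
  exact measurable_theta a
    (isOpen_excursionSet (continuous_cumulativeExcess hf₁ hfin₁ hf₂ hfin₂ a)).measurableSet

end Collapse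

theorem stmt7_general (f₁ f₂ : Circle' → ℝ≥0∞) (hf₁ : Measurable f₁) (hf₂ : Measurable f₂)
    (ρ₁ ρ₂ : Measure Circle') [IsFiniteMeasure ρ₂]
    (hd₁ : ρ₁ = (volume : Measure Circle').withDensity f₁)
    (hd₂ : ρ₂ = (volume : Measure Circle').withDensity f₂)
    (hmass : ρ₁ Set.univ ≤ ρ₂ Set.univ) :
    ∀ a b : Circle',
      (ρ₁ (arcOC a b)).toReal + flux ρ₁ ρ₂ a - flux ρ₁ ρ₂ b
        = (∫⁻ u in arcOC a b ∩ (Jset ρ₁ ρ₂)ᶜ, f₁ u ∂(volume : Measure Circle')).toReal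
          + (∫⁻ u in arcOC a b ∩ Jset ρ₁ ρ₂, f₂ u ∂(volume : Measure Circle')).toReal := by
  intro a b
  subst hd₁ hd₂
  have hmass' : ∫⁻ x, f₁ x ≤ ∫⁻ x, f₂ x := by simpa using hmass
  have hfin₂ : ∫⁻ x, f₂ x ≠ ∞ := by simpa using measure_ne_top (volume.withDensity f₂) univ
  have hfin₁ : ∫⁻ x, f₁ x ≠ ∞ := ne_top_of_le_ne_top hfin₂ hmass'
  set φ := cumulativeExcess f₁ f₂ a
  have hJa := flux_add_coe hf₁ hfin₁ hf₂ hfin₂ hmass' a 0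
  have hJb := flux_add_coe hf₁ hfin₁ hf₂ hfin₂ hmass' a (theta a b)
  rw [AddCircle.coe_zero, add_zero] at hJa
  rw [coe_theta, add_sub_cancel] at hJb
  have hpre : (fun t : ℝ => a + (t : Circle')) ⁻¹' Jset (volume.withDensity f₁)
      (volume.withDensity f₂) = excursionSet φ :=
    ext (add_coe_mem_Jset_iff hf₁ hfin₁ hf₂ hfin₂ hmass' a)
  have hJm := measurableSet_Jset hf₁ hfin₁ hf₂ hfin₂ hmass'
  rw [hJa, hJb, toReal_withDensity_arcOC hf₁ hfin₁,
    toReal_setLIntegral_eq hf₁ hfin₁ a ((measurableSet_arcOC a b).inter hJm.compl),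
    toReal_setLIntegral_eq hf₂ hfin₂ a ((measurableSet_arcOC a b).inter hJm),
    preimage_inter, preimage_inter, preimage_compl, hpre, inter_right_comm,
    inter_right_comm _ (excursionSet φ), preimage_arcOC_inter_Ioo,
    intervalIntegral.integral_of_le (theta_mem a b).1]
  exact setIntegral_Ioc_collapse (intervalIntegrable_toReal_add_coe hf₁ hfin₁ a)
    (intervalIntegrable_toReal_add_coe hf₂ hfin₂ a)
    (integral_toReal_sub_add_coe hf₁ hfin₁ hf₂ hfin₂ a)
    (cumulativeExcess_le_sub_one hf₁ hfin₁ hf₂ hfin₂ hmass' a) (theta_mem a b).1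

/-- if `ρ₁, ρ₂` are absolutely continuous with densities `f₁, f₂`, the
collapsed measure is absolutely continuous with density `f₂` on `𝒥` and `f₁` on `𝒥ᶜ`:
for every half-open arc `(a,b]`,
`ρ₁((a,b]) + J(a) − J(b) = ∫_{(a,b]∩𝒥ᶜ} f₁ + ∫_{(a,b]∩𝒥} f₂`. -/
theorem stmt7 (f₁ f₂ : Circle' → ℝ≥0∞) (hf₁ : Measurable f₁) (hf₂ : Measurable f₂)
    (ρ₁ ρ₂ : Measure Circle') [IsFiniteMeasure ρ₁] [IsFiniteMeasure ρ₂]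
    (hd₁ : ρ₁ = (volume : Measure Circle').withDensity f₁)
    (hd₂ : ρ₂ = (volume : Measure Circle').withDensity f₂)
    (hmass : ρ₁ Set.univ ≤ ρ₂ Set.univ) :
    ∀ a b : Circle',
      (ρ₁ (arcOC a b)).toReal + flux ρ₁ ρ₂ a - flux ρ₁ ρ₂ b
        = (∫⁻ u in arcOC a b ∩ (Jset ρ₁ ρ₂)ᶜ, f₁ u ∂(volume : Measure Circle')).toReal
          + (∫⁻ u in arcOC a b ∩ Jset ρ₁ ρ₂, f₂ u ∂(volume : Measure Circle')).toReal :=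
  stmt7_general f₁ f₂ hf₁ hf₂ ρ₁ ρ₂ hd₁ hd₂ hmass

end
end
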